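/- Let t ≥ 3 and suppose the cycle C_t is unmixed and triangle-free. Then t ∈ {4, 5, 7}. -/

import Mathlib

/-- `A` is an independent set of the simple graph `G`. -/
def IsIndep {V : Type*} (G : SimpleGraph V) (A : Set V) : Prop :=
  ∀ a ∈ A, ∀ b ∈ A, ¬ G.Adj a b

/-- `A` is a maximal independent set of `G`. -/
def IsMaxIndep {V : Type*} (G : SimpleGraph V) (A : Set V) : Prop :=
  IsIndep G A ∧ ∀ B : Set V, IsIndep G B → A ⊆ B → B = A

/-- `G` is unmixed: all maximal independent sets have the same cardinality. -/
def Unmixed {V : Type*} (G : SimpleGraph V) : Prop :=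
  ∀ A B : Set V, IsMaxIndep G A → IsMaxIndep G B → A.ncard = B.ncard

/-!
For every `k` with `2 * k ≤ t ≤ 3 * k`, the vertices `⌊i * t / k⌋` (`i < k`) of `C_t` form a
maximal independent set of size `k`: cyclically consecutive ones are two or three apart.
Taking `k = ⌊t / 2⌋` and `k = ⌈t / 3⌉`, unmixedness forces `⌊t / 2⌋ = ⌈t / 3⌉`, which leaves
`t ∈ {3, 4, 5, 7}`, and `C_3` is a triangle.
-/

open SimpleGraph

theorem isMaxIndep_of_forall_exists_adj {V : Type*} {G : SimpleGraph V} {A : Set V}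
    (hA : IsIndep G A) (hdom : ∀ v ∉ A, ∃ w ∈ A, G.Adj v w) : IsMaxIndep G A := by
  refine ⟨hA, fun B hB hAB => Set.Subset.antisymm (fun v hvB => ?_) hAB⟩
  by_contra hvA
  obtain ⟨w, hwA, hvw⟩ := hdom v hvA
  exact hB v hvB w (hAB hwA) hvw

theorem cycleGraph_adj_iff_val {t : ℕ} (ht : 2 ≤ t) {u v : Fin t} :
    (cycleGraph t).Adj u v ↔ u.val + 1 = v.val ∨ v.val + 1 = u.val ∨
      (u.val = 0 ∧ v.val + 1 = t) ∨ (v.val = 0 ∧ u.val + 1 = t) := by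
  have hu := u.isLt
  have hv := v.isLt
  rw [cycleGraph_adj']
  rcases lt_trichotomy u v with h | rfl | h
  · rw [Fin.coe_sub_iff_lt.mpr h, Fin.coe_sub_iff_le.mpr h.le]
    rw [Fin.lt_def] at h
    omega
  · rw [Fin.coe_sub_iff_le.mpr le_rfl]
    omega
  · rw [Fin.coe_sub_iff_lt.mpr h, Fin.coe_sub_iff_le.mpr h.le]
    rw [Fin.lt_def] at h
    omega

theorem exists_isMaxIndep_cycleGraph_of_gaps {t k : ℕ} (g : ℕ → ℕ) (hg0 : g 0 = 0)
    (hgk : g k = t) (hgap : ∀ i < k, g i + 2 ≤ g (i + 1) ∧ g (i + 1) ≤ g i + 3) :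
    ∃ A : Set (Fin t), IsMaxIndep (cycleGraph t) A ∧ A.ncard = k := by
  have hmono : StrictMonoOn g (Set.Iic k) := strictMonoOn_Iic_of_lt_succ fun i hi => by
    have := hgap i hi
    simp only [Order.succ_eq_add_one]
    omega
  have hsep : ∀ i j, i < j → j ≤ k → g i + 2 ≤ g j := fun i j hij hjk =>
    (hgap i (by omega)).1.trans
      (hmono.monotoneOn (Set.mem_Iic.mpr (by omega)) (Set.mem_Iic.mpr hjk) hij)
  have hlt : ∀ i < k, g i + 2 ≤ t := fun i hi => hgk ▸ hsep i k hi le_rfl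
  have ht : Fin t → 2 ≤ t := fun v => by
    have hk : k ≠ 0 := by
      rintro rfl
      have := v.isLt
      omega
    have := hlt 0 (Nat.pos_of_ne_zero hk)
    omega
  have hadj : ∀ u v : Fin t, (cycleGraph t).Adj u v ↔ u.val + 1 = v.val ∨ v.val + 1 = u.val ∨
      (u.val = 0 ∧ v.val + 1 = t) ∨ (v.val = 0 ∧ u.val + 1 = t) := fun u _ =>
    cycleGraph_adj_iff_val (ht u)
  refine ⟨Fin.val ⁻¹' (g '' Set.Iio k), isMaxIndep_of_forall_exists_adj ?_ ?_, ?_⟩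
  · rintro u ⟨i, hi, hiu⟩ v ⟨j, hj, hjv⟩ huv
    rw [Set.mem_Iio] at hi hj
    rw [hadj, ← hiu, ← hjv] at huv
    have := hlt i hi
    have := hlt j hj
    rcases lt_trichotomy i j with hij | rfl | hij
    · have := hsep i j hij hj.le
      omega
    · omega
    · have := hsep j i hij hi.le
      omega
  · intro v hv
    have hvt := v.isLt
    obtain ⟨i, hik, hiv, hvi⟩ : ∃ i < k, g i ≤ v.val ∧ v.val < g (i + 1) := by
      simpa only [Set.mem_iUnion₂, Finset.mem_range, Set.mem_Ico, exists_prop] using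
        Ico_subset_biUnion_Ico k g ⟨by omega, by omega⟩
    have hgi : g i ≠ v := fun h => hv ⟨i, hik, h⟩
    have hgap_i := hgap i hik
    have hmem : ∀ j < k, ∃ w ∈ Fin.val ⁻¹' (g '' Set.Iio k), w.val = g j :=
      fun j hj => ⟨(⟨g j, by have := hlt j hj; omega⟩ : Fin t), ⟨j, hj, rfl⟩, rfl⟩
    by_cases hnext : v.val = g i + 1
    · obtain ⟨w, hw, hwv⟩ := hmem i hik
      exact ⟨w, hw, by rw [hadj]; omega⟩
    by_cases hlast : i + 1 = k
    · obtain ⟨w, hw, hwv⟩ := hmem 0 (by omega)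
      subst hlast
      exact ⟨w, hw, by rw [hadj]; omega⟩
    · obtain ⟨w, hw, hwv⟩ := hmem (i + 1) (by omega)
      exact ⟨w, hw, by rw [hadj]; omega⟩
  · have hinj : Set.InjOn g (Set.Iio k) := hmono.injOn.mono Set.Iio_subset_Iic_self
    rw [Set.ncard_preimage_of_injective_subset_range Fin.val_injective, hinj.ncard_image,
      Set.ncard_Iio_nat]
    rintro _ ⟨i, hi, rfl⟩
    exact ⟨⟨g i, by have := hlt i hi; omega⟩, rfl⟩

theorem exists_isMaxIndep_cycleGraph_ncard {t k : ℕ} (h2 : 2 * k ≤ t) (h3 : t ≤ 3 * k) :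
    ∃ A : Set (Fin t), IsMaxIndep (cycleGraph t) A ∧ A.ncard = k := by
  refine exists_isMaxIndep_cycleGraph_of_gaps (fun i => i * t / k) (by simp) ?_ fun i hi => ?_
  · rcases k.eq_zero_or_pos with rfl | hk
    · simp only [Nat.div_zero]
      omega
    · exact Nat.mul_div_cancel_left t hk
  · have hk : 0 < k := by omega
    rw [add_one_mul, ← Nat.add_mul_div_right _ _ hk, ← Nat.add_mul_div_right _ _ hk]
    exact ⟨Nat.div_le_div_right (by omega), Nat.div_le_div_right (by omega)⟩

/-- If `t ≥ 3` and the cycle `C_t` is unmixed and triangle-free, then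
`t ∈ {4, 5, 7}`. -/
theorem cycle_unmixed_triangleFree (t : ℕ) (ht : 3 ≤ t)
    (hu : Unmixed (SimpleGraph.cycleGraph t))
    (htf : (SimpleGraph.cycleGraph t).CliqueFree 3) :
    t ∈ ({4, 5, 7} : Set ℕ) := by
  obtain ⟨A, hA, hA_card⟩ := exists_isMaxIndep_cycleGraph_ncard (t := t) (k := t / 2)
    (by omega) (by omega)
  obtain ⟨B, hB, hB_card⟩ := exists_isMaxIndep_cycleGraph_ncard (t := t) (k := (t + 2) / 3)
    (by omega) (by omega)
  have hcard : t / 2 = (t + 2) / 3 := hA_card ▸ hB_card ▸ hu A B hA hB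
  have ht3 : t ≠ 3 := by
    rintro rfl
    exact htf {0, 1, 2} (is3Clique_triple_iff.mpr ⟨by decide, by decide, by decide⟩)
  simp only [Set.mem_insert_iff, Set.mem_singleton_iff]
  omega
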